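/- Every finite bipartite graph G = (X ⊔ Y, E) admits partitions X = X_S ⊔ X_L and Y = Y_S ⊔ Y_L satisfying the following three conditions: (a) there are no edges between X_S and Y_L; (b) the induced subgraph G[X_S, Y_S] is Y-path-saturated; (c) the induced subgraph G[X_L, Y_L] admits a matching saturating every vertex of X_L. -/

import Mathlib

attribute [local instance] Classical.propDecidable

variable {V : Type*}

/-- `X, Y` form a bipartition of the vertex set of the simple graph `G`:
they are disjoint, cover all vertices, and every edge joins `X` to `Y`. -/
def IsBipartition [Fintype V] (G : SimpleGraph V) (X Y : Finset V) : Prop :=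
  Disjoint X Y ∧ X ∪ Y = Finset.univ ∧
    ∀ ⦃u v : V⦄, G.Adj u v → (u ∈ X ∧ v ∈ Y) ∨ (u ∈ Y ∧ v ∈ X)

/-- `M` is a matching of `G` all of whose edges go from `X'` to `Y'`
(i.e. a matching of the induced subgraph `G[X', Y']`), recorded as a set of
pairwise vertex-disjoint adjacent pairs. -/
def IsBipMatching (G : SimpleGraph V) (X' Y' : Finset V) (M : Finset (V × V)) : Prop :=
  (∀ p ∈ M, p.1 ∈ X' ∧ p.2 ∈ Y' ∧ G.Adj p.1 p.2) ∧
  ∀ p ∈ M, ∀ q ∈ M, p ≠ q → p.1 ≠ q.1 ∧ p.2 ≠ q.2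

/-- `M` is envy-free w.r.t. `X`: no unmatched vertex of `X` is adjacent to a
matched vertex on the `Y`-side of `M`. -/
def EnvyFree (G : SimpleGraph V) (X : Finset V) (M : Finset (V × V)) : Prop :=
  ∀ x ∈ X, x ∉ M.image Prod.fst → ∀ y ∈ M.image Prod.snd, ¬ G.Adj x y

/-- The (bipartite) graph `G[X ∪ Y]` is `Y`-path-saturated: for some `k ≥ 1` there are
partitions `X = X_0 ⊔ ⋯ ⊔ X_k` and `Y = Y_1 ⊔ ⋯ ⊔ Y_k` such that for `1 ≤ i ≤ k`
there is a perfect matching between `X_i` and `Y_i`, and every vertex of `Y_i` is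
adjacent to some vertex of `X_{i-1}`. -/
def YPathSaturated (G : SimpleGraph V) (X Y : Finset V) : Prop :=
  ∃ k : ℕ, 1 ≤ k ∧ ∃ A B : ℕ → Finset V,
    (∀ i ∈ Finset.range (k + 1), ∀ j ∈ Finset.range (k + 1), i ≠ j → Disjoint (A i) (A j)) ∧
    (∀ i ∈ Finset.Icc 1 k, ∀ j ∈ Finset.Icc 1 k, i ≠ j → Disjoint (B i) (B j)) ∧
    X = (Finset.range (k + 1)).biUnion A ∧
    Y = (Finset.Icc 1 k).biUnion B ∧
    (∀ i ∈ Finset.Icc 1 k, ∃ f : V → V,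
      Set.BijOn f (A i) (B i) ∧ ∀ x ∈ A i, G.Adj x (f x)) ∧
    (∀ i ∈ Finset.Icc 1 k, ∀ y ∈ B i, ∃ x ∈ A (i - 1), G.Adj x y)

/-!
Let `S ⊆ X` maximise the deficiency `δ(T) = |T| - |N(T)|` and, among such sets, have least size;
take `X_S = S` and `Y_S = N(S)`. Maximality of `δ(S)` gives Hall's condition both for `X \ S` in
`Y \ N(S)` and for `N(S)` in `S`, so `N(S)` is matched onto `S \ X₀` for some `X₀` with
`|X₀| = δ(S)`. Breadth-first search from `X₀` along alternating paths, one layer `X_i, Y_i` per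
round, ends in a set `T` whose neighbourhood is matched into `T \ X₀`; then `δ(T) ≥ δ(S)`, and
minimality forces `T = S`.
-/

open Finset Function

theorem Monotone.pairwise_disjoint_on_sdiff_succ {α : Type*} [GeneralizedBooleanAlgebra α]
    {f : ℕ → α} (hf : Monotone f) : Pairwise (Disjoint on (fun i => f (i + 1) \ f i)) :=
  (pairwise_disjoint_on _).2 fun _ _ hij =>
    disjoint_sdiff_self_right.mono_left (sdiff_le.trans (hf hij))

namespace Finset

variable {α : Type*}

theorem biUnion_Ico_sdiff_of_monotone [DecidableEq α] {f : ℕ → Finset α} (hf : Monotone f)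
    {a b : ℕ} (hab : a ≤ b) : (Ico a b).biUnion (fun i => f (i + 1) \ f i) = f b \ f a := by
  induction b, hab using Nat.le_induction with
  | base => simp
  | succ b hab ih =>
    rw [Ico_add_one_right_eq_Icc, ← Ico_insert_right hab, biUnion_insert, ih,
      sdiff_union_sdiff_cancel (hf b.le_succ) (hf hab)]

theorem exists_iterate_empty_fixed {s : Finset α} {f : Finset α → Finset α} (hf : Monotone f)
    (hs : ∀ t, f t ⊆ s) : ∃ n, f (f^[n] ∅) = f^[n] ∅ := by
  by_contra! h
  have hmono : Monotone fun n => f^[n] ∅ := hf.monotone_iterate_of_le_map (empty_subset _)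
  have hstrict : StrictMono fun n => f^[n] ∅ := strictMono_nat_of_lt_succ fun n =>
    (hmono n.le_succ).lt_of_ne (by
      dsimp only
      rw [iterate_succ_apply']
      exact (h n).symm)
  have hcard : #s + 1 ≤ #(f^[#s + 1] ∅) := (card_strictMono.comp hstrict).id_le _
  have hsub : f^[#s + 1] ∅ ⊆ s := by
    rw [iterate_succ_apply']
    exact hs _
  have := card_le_card hsub
  omega

end Finset

namespace SimpleGraph

variable (G : SimpleGraph V)

noncomputable def neighborsIn (Y T : Finset V) : Finset V := {y ∈ Y | ∃ x ∈ T, G.Adj x y}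

noncomputable def deficiency (Y T : Finset V) : ℤ := #T - #(G.neighborsIn Y T)

variable {G}

@[simp]
lemma mem_neighborsIn {Y T : Finset V} {y : V} :
    y ∈ G.neighborsIn Y T ↔ y ∈ Y ∧ ∃ x ∈ T, G.Adj x y :=
  mem_filter

lemma neighborsIn_subset (Y T : Finset V) : G.neighborsIn Y T ⊆ Y :=
  filter_subset _ _

lemma neighborsIn_mono {Y T T' : Finset V} (h : T ⊆ T') :
    G.neighborsIn Y T ⊆ G.neighborsIn Y T' :=
  monotone_filter_right _ fun _ _ ⟨x, hx, hxy⟩ => ⟨x, h hx, hxy⟩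

lemma neighborsIn_union (Y T T' : Finset V) :
    G.neighborsIn Y (T ∪ T') = G.neighborsIn Y T ∪ G.neighborsIn Y T' := by
  ext y
  simp only [mem_neighborsIn, mem_union, or_and_right, exists_or, and_or_left]

lemma neighborsIn_sdiff (Y Z T : Finset V) :
    G.neighborsIn (Y \ Z) T = G.neighborsIn Y T \ Z := by
  ext y
  simp only [mem_neighborsIn, mem_sdiff]
  tauto

theorem exists_injOn_of_hall {X Y : Finset V} (hall : ∀ T ⊆ X, #T ≤ #(G.neighborsIn Y T)) :
    ∃ f : V → V, Set.InjOn f X ∧ ∀ x ∈ X, f x ∈ Y ∧ G.Adj x (f x) := by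
  obtain ⟨f, hf, hfY⟩ := (all_card_le_biUnion_card_iff_exists_injective
    fun x : X => G.neighborsIn Y {x.1}).1 fun s => by
      have hs : s.biUnion (fun x => G.neighborsIn Y {x.1}) =
          G.neighborsIn Y (s.map (Embedding.subtype _)) := by
        ext y
        simp only [mem_biUnion, mem_neighborsIn, mem_singleton, mem_map, Embedding.coe_subtype]
        aesop
      rw [hs, ← card_map (Embedding.subtype _)]
      exact hall _ fun x hx => by
        obtain ⟨x, -, rfl⟩ := mem_map.1 hx
        exact x.2
  refine ⟨fun v => if hv : v ∈ X then f ⟨v, hv⟩ else v, fun a ha b hb hab => ?_, fun x hx => ?_⟩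
  · have h : f ⟨a, ha⟩ = f ⟨b, hb⟩ := by
      simpa only [dif_pos (mem_coe.1 ha), dif_pos (mem_coe.1 hb)] using hab
    exact congrArg Subtype.val (hf h)
  · simpa [dif_pos hx] using hfY ⟨x, hx⟩

theorem exists_bipMatching_of_hall {X Y : Finset V}
    (hall : ∀ T ⊆ X, #T ≤ #(G.neighborsIn Y T)) :
    ∃ M : Finset (V × V), IsBipMatching G X Y M ∧ X ⊆ M.image Prod.fst := by
  obtain ⟨f, hf, hfY⟩ := exists_injOn_of_hall hall
  refine ⟨X.image fun x => (x, f x), ⟨?_, ?_⟩, fun x hx => ?_⟩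
  · simp only [mem_image, forall_exists_index, and_imp]
    rintro _ x hx rfl
    exact ⟨hx, hfY x hx⟩
  · simp only [mem_image, forall_exists_index, and_imp]
    rintro _ a ha rfl _ b hb rfl hab
    exact ⟨fun h : a = b => hab (h ▸ rfl), fun h : f a = f b => hab (hf ha hb h ▸ rfl)⟩
  · exact mem_image.2 ⟨(x, f x), mem_image_of_mem _ hx, rfl⟩

theorem exists_min_card_max_deficiency (X Y : Finset V) :
    ∃ S ⊆ X, (∀ T ⊆ X, G.deficiency Y T ≤ G.deficiency Y S) ∧
      ∀ T ⊆ X, G.deficiency Y T = G.deficiency Y S → #S ≤ #T := by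
  obtain ⟨S₀, hS₀, hmax⟩ := exists_max_image X.powerset (G.deficiency Y) ⟨∅, empty_mem_powerset X⟩
  obtain ⟨S, hS, hmin⟩ := exists_min_image {T ∈ X.powerset | G.deficiency Y T = G.deficiency Y S₀}
    card ⟨S₀, mem_filter.2 ⟨hS₀, rfl⟩⟩
  simp only [mem_filter, mem_powerset] at hS₀ hmax hS hmin
  refine ⟨S, hS.1, fun T hT => hS.2 ▸ hmax T hT, fun T hT hTS => hmin T ⟨hT, hTS.trans hS.2⟩⟩

theorem card_le_card_neighborsIn_sdiff_of_max_deficiency {X Y S T : Finset V} (hSX : S ⊆ X)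
    (hmax : ∀ T ⊆ X, G.deficiency Y T ≤ G.deficiency Y S) (hT : T ⊆ X \ S) :
    #T ≤ #(G.neighborsIn (Y \ G.neighborsIn Y S) T) := by
  -- `δ(S ∪ T) = δ(S) + |T| - |N(T) \ N(S)|`
  have hST := hmax (S ∪ T) (union_subset hSX (hT.trans sdiff_subset))
  have hcard : #(S ∪ T) = #S + #T :=
    card_union_of_disjoint (disjoint_of_subset_right hT disjoint_sdiff)
  have hN := card_sdiff_add_card (G.neighborsIn Y T) (G.neighborsIn Y S)
  rw [neighborsIn_sdiff]
  rw [deficiency, deficiency, neighborsIn_union, union_comm (G.neighborsIn Y S), ← hN, hcard] at hST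
  push_cast at hST
  omega

theorem card_le_card_neighborsIn_of_max_deficiency {X Y S U : Finset V} (hSX : S ⊆ X)
    (hmax : ∀ T ⊆ X, G.deficiency Y T ≤ G.deficiency Y S) (hU : U ⊆ G.neighborsIn Y S) :
    #U ≤ #(G.neighborsIn S U) := by
  -- deleting from `S` the neighbours of `U` removes all of `U` from `N(S)`
  have hN : G.neighborsIn Y (S \ G.neighborsIn S U) ⊆ G.neighborsIn Y S \ U := by
    intro y
    simp only [mem_neighborsIn, mem_sdiff, not_and, not_exists]
    rintro ⟨hy, x, ⟨hxS, hxU⟩, hxy⟩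
    exact ⟨⟨hy, x, hxS, hxy⟩, fun hyU => hxU hxS y hyU hxy.symm⟩
  have hS' := hmax (S \ G.neighborsIn S U) (sdiff_subset.trans hSX)
  rw [deficiency, deficiency, card_sdiff_of_subset (neighborsIn_subset _ _)] at hS'
  have := card_le_card hN
  rw [card_sdiff_of_subset hU] at this
  have := card_le_card (G.neighborsIn_subset S U)
  have := card_le_card hU
  omega

theorem exists_bijOn_neighborsIn_of_max_deficiency {X Y S : Finset V} (hSX : S ⊆ X)
    (hmax : ∀ T ⊆ X, G.deficiency Y T ≤ G.deficiency Y S) :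
    ∃ X₀ ⊆ S, ∃ g : V → V, Set.BijOn g ↑(S \ X₀) ↑(G.neighborsIn Y S) ∧
      ∀ x ∈ S \ X₀, G.Adj x (g x) := by
  rcases isEmpty_or_nonempty V with hV | hV
  · exact ⟨∅, empty_subset S, id, by simp only [Set.eq_empty_of_isEmpty, Set.bijOn_empty],
      isEmptyElim⟩
  set D := G.neighborsIn Y S
  obtain ⟨h, hinj, hh⟩ := exists_injOn_of_hall (G := G) (X := D) (Y := S) fun U hU =>
    card_le_card_neighborsIn_of_max_deficiency hSX hmax hU
  have hD : S \ (S \ D.image h) = D.image h := Finset.sdiff_sdiff_eq_self fun x hx => by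
    obtain ⟨y, hy, rfl⟩ := mem_image.1 hx
    exact (hh y hy).1
  have hbij : Set.BijOn (invFunOn h D) (h '' D) D :=
    hinj.bijOn_image.symm hinj.bijOn_image.invOn_invFunOn.symm
  refine ⟨S \ D.image h, sdiff_subset, invFunOn h D, by rwa [hD, coe_image], ?_⟩
  rw [hD]
  intro x hx
  obtain ⟨y, hy, rfl⟩ := mem_image.1 hx
  rw [hinj.leftInvOn_invFunOn hy]
  exact (hh y hy).2.symm

variable (G) in
noncomputable def alternatingStep (S X₀ : Finset V) (g : V → V) (T : Finset V) : Finset V :=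
  X₀ ∪ {x ∈ S \ X₀ | ∃ x' ∈ T, G.Adj x' (g x)}

section alternatingStep

variable {S X₀ : Finset V} {g : V → V}

lemma alternatingStep_mono : Monotone (G.alternatingStep S X₀ g) := fun _ _ h =>
  union_subset_union_right <| monotone_filter_right _ fun _ _ ⟨x', hx', hadj⟩ => ⟨x', h hx', hadj⟩

lemma alternatingStep_subset (hX₀ : X₀ ⊆ S) (T : Finset V) : G.alternatingStep S X₀ g T ⊆ S :=
  union_subset hX₀ ((filter_subset _ _).trans sdiff_subset)

lemma alternatingStep_empty : G.alternatingStep S X₀ g ∅ = X₀ := by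
  simp [alternatingStep]

lemma exists_adj_of_mem_alternatingStep_sdiff {T T' : Finset V} {x : V}
    (hx : x ∈ G.alternatingStep S X₀ g T' \ G.alternatingStep S X₀ g T) :
    x ∈ S \ X₀ ∧ ∃ x' ∈ T' \ T, G.Adj x' (g x) := by
  simp only [alternatingStep, mem_sdiff, mem_union, mem_filter, not_or, not_and, not_exists] at hx
  obtain ⟨hx₀ | ⟨hxS, x', hx', hadj⟩, hxX₀, hxT⟩ := hx
  · exact absurd hx₀ hxX₀
  · exact ⟨mem_sdiff.2 hxS, x', mem_sdiff.2 ⟨hx', fun h => hxT hxS x' h hadj⟩, hadj⟩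

theorem yPathSaturated_of_bijOn {D : Finset V} (hX₀ : X₀ ⊆ S)
    (hg : Set.BijOn g ↑(S \ X₀) ↑D) (hadj : ∀ x ∈ S \ X₀, G.Adj x (g x))
    (hS : ∀ T ⊆ S, G.alternatingStep S X₀ g T = T → T = S) :
    YPathSaturated G S D := by
  set L : ℕ → Finset V := fun n => (G.alternatingStep S X₀ g)^[n] ∅
  have hL0 : L 0 = ∅ := rfl
  have hLmono : Monotone L := alternatingStep_mono.monotone_iterate_of_le_map (empty_subset _)
  have hLsucc (n : ℕ) : L (n + 1) = G.alternatingStep S X₀ g (L n) := iterate_succ_apply' _ _ _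
  have hLS (n : ℕ) : L (n + 1) ⊆ S := hLsucc n ▸ alternatingStep_subset hX₀ _
  have hL1 : L 1 = X₀ := alternatingStep_empty
  obtain ⟨n, hn⟩ := exists_iterate_empty_fixed alternatingStep_mono (alternatingStep_subset hX₀)
  have hfix : G.alternatingStep S X₀ g (L (n + 1)) = L (n + 1) := by rw [hLsucc, hn, hn]
  have hLn : L (n + 1 + 1) = S := by
    rw [hLsucc, hfix]
    exact hS _ (hLS n) hfix
  set A : ℕ → Finset V := fun i => L (i + 1) \ L i
  have hAsub {i : ℕ} (hi : 1 ≤ i) : A i ⊆ S \ X₀ := sdiff_subset_sdiff (hLS i) (hL1 ▸ hLmono hi)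
  have hAdisj := hLmono.pairwise_disjoint_on_sdiff_succ
  refine ⟨n + 1, le_add_self, A, fun i => (A i).image g, fun i _ j _ hij => hAdisj hij,
    fun i hi j hj hij => ?_, ?_, ?_,
    fun i hi => ⟨g, ?_, fun x hx => hadj x (hAsub (mem_Icc.1 hi).1 hx)⟩, ?_⟩
  · rw [← disjoint_coe, coe_image, coe_image]
    exact (disjoint_coe.2 (hAdisj hij)).image hg.injOn (coe_subset.2 (hAsub (mem_Icc.1 hi).1))
      (coe_subset.2 (hAsub (mem_Icc.1 hj).1))
  · rw [range_eq_Ico, biUnion_Ico_sdiff_of_monotone hLmono (Nat.zero_le _), hLn, hL0, sdiff_empty]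
  · rw [← biUnion_image, ← Ico_add_one_right_eq_Icc,
      biUnion_Ico_sdiff_of_monotone hLmono (by omega), hLn, hL1, ← coe_inj, coe_image, hg.image_eq]
  · rw [coe_image]
    exact (hg.injOn.mono (coe_subset.2 (hAsub (mem_Icc.1 hi).1))).bijOn_image
  · intro i hi y hy
    obtain ⟨x, hx, rfl⟩ := mem_image.1 hy
    obtain ⟨j, rfl⟩ : ∃ j, i = j + 1 := ⟨i - 1, by have := (mem_Icc.1 hi).1; omega⟩
    have hx : x ∈ G.alternatingStep S X₀ g (L (j + 1)) \ G.alternatingStep S X₀ g (L j) := by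
      rw [← hLsucc, ← hLsucc]
      exact hx
    exact (exists_adj_of_mem_alternatingStep_sdiff hx).2

end alternatingStep

theorem eq_of_alternatingStep_eq_of_min_card_max_deficiency {X Y S X₀ T : Finset V} {g : V → V}
    (hSX : S ⊆ X) (hmax : ∀ T ⊆ X, G.deficiency Y T ≤ G.deficiency Y S)
    (hmin : ∀ T ⊆ X, G.deficiency Y T = G.deficiency Y S → #S ≤ #T)
    (hX₀ : X₀ ⊆ S) (hg : Set.BijOn g ↑(S \ X₀) ↑(G.neighborsIn Y S))
    (hTS : T ⊆ S) (hT : G.alternatingStep S X₀ g T = T) : T = S := by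
  have hX₀T : X₀ ⊆ T := hT ▸ subset_union_left
  have hN : G.neighborsIn Y T ⊆ (T \ X₀).image g := by
    intro y hy
    obtain ⟨x, hx, rfl⟩ := hg.surjOn (neighborsIn_mono hTS hy)
    have hxT : x ∈ G.alternatingStep S X₀ g T :=
      mem_union_right _ (mem_filter.2 ⟨hx, (mem_neighborsIn.1 hy).2⟩)
    exact mem_image_of_mem g (mem_sdiff.2 ⟨hT ▸ hxT, (mem_sdiff.1 hx).2⟩)
  have hNT := (card_le_card hN).trans card_image_le
  have hNS : #(S \ X₀) = #(G.neighborsIn Y S) := card_nbij g hg.mapsTo hg.injOn hg.surjOn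
  rw [card_sdiff_of_subset hX₀T] at hNT
  rw [card_sdiff_of_subset hX₀] at hNS
  have hdef : G.deficiency Y T = G.deficiency Y S := by
    refine le_antisymm (hmax T (hTS.trans hSX)) ?_
    have := card_le_card hX₀T
    have := card_le_card hX₀
    simp only [deficiency]
    omega
  exact eq_of_subset_of_card_le hTS (hmin T (hTS.trans hSX) hdef)

end SimpleGraph

open SimpleGraph

theorem structure_theorem (G : SimpleGraph V) (X Y : Finset V) :
    ∃ XS XL YS YL : Finset V,
      Disjoint XS XL ∧ XS ∪ XL = X ∧
      Disjoint YS YL ∧ YS ∪ YL = Y ∧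
      (∀ x ∈ XS, ∀ y ∈ YL, ¬ G.Adj x y) ∧
      YPathSaturated G XS YS ∧
      (∃ M : Finset (V × V), IsBipMatching G XL YL M ∧ XL ⊆ M.image Prod.fst) := by
  obtain ⟨S, hSX, hmax, hmin⟩ := G.exists_min_card_max_deficiency X Y
  obtain ⟨X₀, hX₀, g, hg, hadj⟩ := exists_bijOn_neighborsIn_of_max_deficiency hSX hmax
  have hpath : YPathSaturated G S (G.neighborsIn Y S) :=
    yPathSaturated_of_bijOn hX₀ hg hadj fun _ hTS hT =>
      eq_of_alternatingStep_eq_of_min_card_max_deficiency hSX hmax hmin hX₀ hg hTS hT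
  obtain ⟨M, hM, hXL⟩ := exists_bipMatching_of_hall fun _ hT =>
    card_le_card_neighborsIn_sdiff_of_max_deficiency hSX hmax hT
  refine ⟨S, X \ S, G.neighborsIn Y S, Y \ G.neighborsIn Y S, disjoint_sdiff,
    union_sdiff_of_subset hSX, disjoint_sdiff, union_sdiff_of_subset (G.neighborsIn_subset Y S),
    fun x hx y hy hxy => (mem_sdiff.1 hy).2 (mem_neighborsIn.2 ⟨(mem_sdiff.1 hy).1, x, hx, hxy⟩),
    hpath, M, hM, hXL⟩
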